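/- Let N be a positive integer and u, v complex numbers. Define f(u,v) = ∑_{m₁=1}^{N} ∑_{m₂=1}^{N} 1/(m₁^u (m₁+m₂)^v) and g(u,v) = ∑_{m=1}^{N} ∑_{n=N+1}^{N+m} 1/(m^u n^v). Then f(u,v) + f(v,u) + ∑_{m=1}^{N} 1/m^{u+v} = (∑_{m=1}^{N} 1/m^u)(∑_{n=1}^{N} 1/n^v) + g(u,v) + g(v,u). -/

import Mathlib

open Finset

theorem euler_zagier_identity (N : ℕ) (hN : 0 < N) (u v : ℂ)
    (f : ℂ → ℂ → ℂ)
    (hf : ∀ u v : ℂ, f u v =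
      ∑ m₁ ∈ Icc 1 N, ∑ m₂ ∈ Icc 1 N, 1 / ((m₁ : ℂ) ^ u * ((m₁ + m₂ : ℕ) : ℂ) ^ v))
    (g : ℂ → ℂ → ℂ)
    (hg : ∀ u v : ℂ, g u v =
      ∑ m ∈ Icc 1 N, ∑ n ∈ Icc (N + 1) (N + m), 1 / ((m : ℂ) ^ u * (n : ℂ) ^ v)) :
    f u v + f v u + ∑ m ∈ Icc 1 N, 1 / (m : ℂ) ^ (u + v) =
      (∑ m ∈ Icc 1 N, 1 / (m : ℂ) ^ u) * (∑ n ∈ Icc 1 N, 1 / (n : ℂ) ^ v)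
        + g u v + g v u := by
  have key : ∀ w z : ℂ, f w z =
      (∑ m ∈ Icc 1 N, ∑ n ∈ Ioc m N, 1 / ((m : ℂ) ^ w * (n : ℂ) ^ z)) + g w z := by
    intro w z
    rw [hf, hg, ← Finset.sum_add_distrib]
    refine Finset.sum_congr rfl fun m hm => ?_
    have hmN : m ≤ N := (Finset.mem_Icc.mp hm).2
    have h1 : ∑ m₂ ∈ Icc 1 N, 1 / ((m : ℂ) ^ w * ((m + m₂ : ℕ) : ℂ) ^ z)
        = ∑ n ∈ Icc (m + 1) (m + N), 1 / ((m : ℂ) ^ w * (n : ℂ) ^ z) := by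
      rw [← Finset.map_add_left_Icc, Finset.sum_map]
      rfl
    rw [h1, Finset.Icc_add_one_left_eq_Ioc,
      ← Finset.sum_Ioc_consecutive _ hmN (Nat.le_add_left N m)]
    congr 1
    rw [← Finset.Icc_add_one_left_eq_Ioc, Nat.add_comm m N]
  have split : ∀ (a : ℕ → ℕ → ℂ),
      ∑ m ∈ Icc 1 N, ∑ n ∈ Icc 1 N, a m n
        = (∑ m ∈ Icc 1 N, ∑ n ∈ Ioc m N, a m n)
          + (∑ m ∈ Icc 1 N, ∑ n ∈ Ioc m N, a n m)
          + ∑ m ∈ Icc 1 N, a m m := by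
    intro a
    have h1 : ∀ m ∈ Icc 1 N, ∑ n ∈ Icc 1 N, a m n
        = ((∑ n ∈ Ico 1 m, a m n) + a m m) + ∑ n ∈ Ioc m N, a m n := by
      intro m hm
      obtain ⟨h1m, hmN⟩ := Finset.mem_Icc.mp hm
      have : Icc 1 N = Ioc 0 N := by
        rw [← Finset.Icc_add_one_left_eq_Ioc, Nat.zero_add]
      rw [this, ← Finset.sum_Ioc_consecutive _ (Nat.zero_le m) hmN]
      congr 1
      rw [show Ioc 0 m = Ico 1 (m + 1) by rw [← Finset.Icc_add_one_left_eq_Ioc, Finset.Ico_add_one_right_eq_Icc, Nat.zero_add],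
        Finset.sum_Ico_succ_top h1m]
    rw [Finset.sum_congr rfl h1]
    simp only [Finset.sum_add_distrib]
    have h2 : ∑ m ∈ Icc 1 N, ∑ n ∈ Ico 1 m, a m n
        = ∑ n ∈ Icc 1 N, ∑ m ∈ Ioc n N, a m n := by
      refine Finset.sum_comm' ?_
      intro m n
      simp only [Finset.mem_Icc, Finset.mem_Ico, Finset.mem_Ioc]
      omega
    rw [h2]
    ring
  have hprod : (∑ m ∈ Icc 1 N, 1 / (m : ℂ) ^ u) * (∑ n ∈ Icc 1 N, 1 / (n : ℂ) ^ v)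
      = ∑ m ∈ Icc 1 N, ∑ n ∈ Icc 1 N, 1 / ((m : ℂ) ^ u * (n : ℂ) ^ v) := by
    rw [Finset.sum_mul_sum]
    refine Finset.sum_congr rfl fun m _ => Finset.sum_congr rfl fun n _ => ?_
    rw [div_mul_div_comm, one_mul]
  have hdiag : ∑ m ∈ Icc 1 N, 1 / (m : ℂ) ^ (u + v)
      = ∑ m ∈ Icc 1 N, 1 / ((m : ℂ) ^ u * (m : ℂ) ^ v) := by
    refine Finset.sum_congr rfl fun m hm => ?_
    have hm0 : (m : ℂ) ≠ 0 := by
      have := (Finset.mem_Icc.mp hm).1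
      exact_mod_cast Nat.cast_ne_zero.mpr (by omega)
    rw [Complex.cpow_add _ _ hm0]
  have hswap : (∑ m ∈ Icc 1 N, ∑ n ∈ Ioc m N, 1 / ((m : ℂ) ^ v * (n : ℂ) ^ u))
      = ∑ m ∈ Icc 1 N, ∑ n ∈ Ioc m N, 1 / ((n : ℂ) ^ u * (m : ℂ) ^ v) := by
    refine Finset.sum_congr rfl fun m _ => Finset.sum_congr rfl fun n _ => ?_
    rw [mul_comm]
  rw [key u v, key v u, hprod, split (fun m n => 1 / ((m : ℂ) ^ u * (n : ℂ) ^ v)),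
    hdiag, hswap]
  ring
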